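/- Let L be a 2-dimensional left ideal of Λ which is different from soc Λ. Then either L is contained in U(1,−1,0) = Λ(x−y) + soc Λ and L is isomorphic to Λ(x−y) as a left Λ-module, or L is contained in U(0,0,1) = Λz + soc Λ and L is isomorphic to Λz as a left Λ-module. -/

import Mathlib

open CategoryTheory Limits Opposite

/-- The algebra `Λ = Λ(q)` of Ringel–Zhang: a `k`-algebra with distinguished elements
`x, y, z` satisfying the defining relations
`x² = y² = z² = 0`, `yz = 0`, `xy + q·yx = 0`, `xz = zx`, `zy = zx`,
and admitting the `k`-basis `{1, x, y, z, yx, zx}`.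
Any such algebra is canonically isomorphic to the quotient of the free algebra
`k⟨x,y,z⟩` by the two-sided ideal generated by these relations. -/
structure LambdaAlg (k : Type) [Field k] (q : k) (Λ : Type) [Ring Λ] [Algebra k Λ] :
    Type where
  x : Λ
  y : Λ
  z : Λ
  hxx : x * x = 0
  hyy : y * y = 0
  hzz : z * z = 0
  hyz : y * z = 0
  hxy : x * y + q • (y * x) = 0
  hxz : x * z - z * x = 0
  hzy : z * y - z * x = 0
  basis : Module.Basis (Fin 6) k Λ
  hb0 : basis 0 = 1
  hb1 : basis 1 = x
  hb2 : basis 2 = y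
  hb3 : basis 3 = z
  hb4 : basis 4 = y * x
  hb5 : basis 5 = z * x

namespace LambdaAlg

variable {k : Type} [Field k] {q : k} {Λ : Type} [Ring Λ] [Algebra k Λ]

/-- The element `ax + by + cz` of `Λ`. -/
def w (D : LambdaAlg k q Λ) (a b c : k) : Λ := a • D.x + b • D.y + c • D.z

/-- The left ideal `U(a,b,c) = Λ(ax+by+cz) + Λ·yx + Λ·zx` of `Λ`. -/
def U (D : LambdaAlg k q Λ) (a b c : k) : Submodule Λ Λ :=
  Submodule.span Λ {D.w a b c, D.y * D.x, D.z * D.x}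

/-- The left `Λ`-module `M(a,b,c) = Λ/U(a,b,c)`. -/
abbrev M (D : LambdaAlg k q Λ) (a b c : k) : Type := Λ ⧸ D.U a b c

/-- The right ideal `U′(a,b,c) = (ax+by+cz)Λ + yx·Λ + zx·Λ` of `Λ`,
viewed as a `Λᵐᵒᵖ`-submodule of `Λ`. -/
def U' (D : LambdaAlg k q Λ) (a b c : k) : Submodule Λᵐᵒᵖ Λ :=
  Submodule.span Λᵐᵒᵖ {D.w a b c, D.y * D.x, D.z * D.x}

/-- The right `Λ`-module `M′(a,b,c) = Λ/U′(a,b,c)` (a module over `Λᵐᵒᵖ`). -/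
abbrev M' (D : LambdaAlg k q Λ) (a b c : k) : Type := Λ ⧸ D.U' a b c

/-- The `k`-subspace `{m ∈ M : x·m = y·m = z·m = 0}` of a left `Λ`-module `M`;
since `x, y, z` generate `rad Λ` and every simple `Λ`-module is isomorphic to `k`,
this is the socle of `M`. -/
def ann (D : LambdaAlg k q Λ) (M : Type) [AddCommGroup M] [Module k M] [Module Λ M]
    [IsScalarTower k Λ M] : Submodule k M where
  carrier := {m | D.x • m = 0 ∧ D.y • m = 0 ∧ D.z • m = 0}
  add_mem' := by
    rintro a b ⟨h1, h2, h3⟩ ⟨g1, g2, g3⟩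
    simp [smul_add, h1, h2, h3, g1, g2, g3]
  zero_mem' := by simp
  smul_mem' := by
    rintro a m ⟨h1, h2, h3⟩
    refine ⟨?_, ?_, ?_⟩ <;> rw [smul_comm] <;> simp [h1, h2, h3]

/-- The submodule `(rad Λ)·M = x·M + y·M + z·M` of a left `Λ`-module `M`. -/
def radM (D : LambdaAlg k q Λ) (M : Type) [AddCommGroup M] [Module Λ M] :
    Submodule Λ M :=
  Submodule.span Λ
    (Set.range (fun m : M => D.x • m) ∪ Set.range (fun m : M => D.y • m) ∪
      Set.range (fun m : M => D.z • m))

end LambdaAlg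

/-- A module is indecomposable if it is nonzero and is not the direct sum of two
nonzero submodules. -/
def IsIndecomposable (R : Type) [Ring R] (M : Type) [AddCommGroup M] [Module R M] :
    Prop :=
  Nontrivial M ∧
    ∀ N₁ N₂ : Submodule R M, N₁ ⊓ N₂ = ⊥ → N₁ ⊔ N₂ = ⊤ → N₁ = ⊥ ∨ N₂ = ⊥

/-- A module is torsionless if it admits an injective linear map into a finite free
module. -/
def IsTorsionless (R : Type) [Ring R] (M : Type) [AddCommGroup M] [Module R M] : Prop :=
  ∃ (n : ℕ) (f : M →ₗ[R] (Fin n → R)), Function.Injective f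

/-- The canonical evaluation map `M → M** = Hom_{Λᵒᵖ}(Hom_Λ(M, Λ), Λ)`,
sending `m` to `f ↦ f m`. -/
def evalMap (Λ : Type) [Ring Λ] (M : Type) [AddCommGroup M] [Module Λ M] :
    M → ((M →ₗ[Λ] Λ) →ₗ[Λᵐᵒᵖ] Λ) := fun m =>
  { toFun := fun f => f m
    map_add' := fun _ _ => rfl
    map_smul' := fun _ _ => rfl }

/-- The transformation `ω′(a,b,c) = (a, q⁻¹b, −((a+q⁻¹b)/a)·c)` on triples. -/
def omegaPrime {k : Type} [Field k] (q : k) (t : k × k × k) : k × k × k :=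
  (t.1, q⁻¹ * t.2.1, -((t.1 + q⁻¹ * t.2.1) / t.1) * t.2.2)

/-!
`Λ` is local: its radical is spanned by `x, y, z, yx, zx` and is nilpotent, so a proper left
ideal `L` lies in `rad Λ`. As `dim L = 2 = dim soc Λ` and `L ≠ soc Λ`, some `u ∈ L` lies outside
the socle, and then `L` cannot contain the whole socle. Writing `u ≡ ax + by + cz` modulo the
socle, the elements `yu = a·yx`, `zu = (a+b)·zx`, `xu = -qb·yx + c·zx` of `L` force either
`b = -a`, `c = 0` (so `u ≡ a(x - y)`) or `a = b = 0` (so `u ≡ cz`). In both cases `L = Λu`, and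
`u` has the same left annihilator as `x - y`, resp. `z`.
-/

theorem LinearIndependent.card_le_finrank_of_forall_mem {K V : Type*} [DivisionRing K]
    [AddCommGroup V] [Module K V] [Module.Finite K V] {n : ℕ} {v : Fin n → V}
    (hv : LinearIndependent K v) {P : Submodule K V} (hP : ∀ i, v i ∈ P) :
    n ≤ Module.finrank K P := by
  simpa [finrank_span_eq_card hv] using
    Submodule.finrank_mono (Submodule.span_le.2 (Set.range_subset_iff.2 hP))

theorem Submodule.eq_of_le_of_linearIndependent {K R M : Type*} [Field K] [Ring R] [Algebra K R]
    [AddCommGroup M] [Module K M] [Module R M] [IsScalarTower K R M] [Module.Finite K M]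
    {N L : Submodule R M} (hNL : N ≤ L) {n : ℕ} {v : Fin n → M} (hv : LinearIndependent K v)
    (hvN : ∀ i, v i ∈ N) (hL : Module.finrank K L = n) : N = L :=
  Submodule.restrictScalars_injective K R M <| Submodule.eq_of_le_of_finrank_le hNL <|
    hL.trans_le (hv.card_le_finrank_of_forall_mem (P := N.restrictScalars K) hvN)

theorem Ideal.torsionOf_eq_of_forall_not_isUnit {R M : Type*} [Ring R] [AddCommGroup M]
    [Module R M] {u w : M} (hu : u ≠ 0) (hw : w ≠ 0) (h : ∀ r : R, ¬IsUnit r → r • (u - w) = 0) :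
    Ideal.torsionOf R M u = Ideal.torsionOf R M w := by
  have key : ∀ {a b : M}, a ≠ 0 → (∀ r : R, ¬IsUnit r → r • (a - b) = 0) →
      ∀ r : R, r • a = 0 → r • b = 0 := fun ha hab r hra => by
    have hr : ¬IsUnit r := fun hr => ha (hr.smul_eq_zero.1 hra)
    simpa [smul_sub, hra] using hab r hr
  ext r
  exact ⟨key hu h r, key hw (fun r hr => by rw [← neg_sub, smul_neg, h r hr, neg_zero]) r⟩

theorem Submodule.nonempty_linearEquiv_span_singleton_of_torsionOf_eq {R M : Type*} [Ring R]
    [AddCommGroup M] [Module R M] {u w : M} (h : Ideal.torsionOf R M u = Ideal.torsionOf R M w) :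
    Nonempty ((R ∙ u) ≃ₗ[R] (R ∙ w)) :=
  ⟨(Ideal.quotTorsionOfEquivSpanSingleton R M u).symm ≪≫ₗ Submodule.quotEquivOfEq _ _ h ≪≫ₗ
    Ideal.quotTorsionOfEquivSpanSingleton R M w⟩

namespace LambdaAlg

variable {k : Type} [Field k] {q : k} {Λ : Type} [Ring Λ] [Algebra k Λ] (D : LambdaAlg k q Λ)

lemma x_mul_y : D.x * D.y = (-q) • (D.y * D.x) := by
  rw [neg_smul]; linear_combination (norm := module) D.hxy

lemma x_mul_z : D.x * D.z = D.z * D.x := sub_eq_zero.1 D.hxz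

lemma z_mul_y : D.z * D.y = D.z * D.x := sub_eq_zero.1 D.hzy

/-- The multiplication table of `Λ` in the basis `1, x, y, z, yx, zx`. -/
def mulCoords (q : k) (c d : Fin 6 → k) : Fin 6 → k :=
  ![c 0 * d 0,
    c 0 * d 1 + c 1 * d 0,
    c 0 * d 2 + c 2 * d 0,
    c 0 * d 3 + c 3 * d 0,
    c 0 * d 4 + c 4 * d 0 - q * (c 1 * d 2) + c 2 * d 1,
    c 0 * d 5 + c 5 * d 0 + c 1 * d 3 + c 3 * d 1 + c 3 * d 2]

noncomputable def ofCoords (c : Fin 6 → k) : Λ := ∑ i, c i • D.basis i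

lemma repr_ofCoords (c : Fin 6 → k) : ⇑(D.basis.repr (D.ofCoords c)) = c :=
  D.basis.repr_sum_self c

lemma ofCoords_repr (u : Λ) : D.ofCoords (D.basis.repr u) = u :=
  D.basis.sum_repr u

lemma ofCoords_eq (c : Fin 6 → k) : D.ofCoords c =
    c 0 • 1 + c 1 • D.x + c 2 • D.y + c 3 • D.z + c 4 • (D.y * D.x) + c 5 • (D.z * D.x) := by
  rw [ofCoords, Fin.sum_univ_six, D.hb0, D.hb1, D.hb2, D.hb3, D.hb4, D.hb5]

lemma ofCoords_mul (c d : Fin 6 → k) :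
    D.ofCoords c * D.ofCoords d = D.ofCoords (mulCoords q c d) := by
  have hxyx : D.x * (D.y * D.x) = 0 := by
    rw [← mul_assoc, D.x_mul_y, smul_mul_assoc, mul_assoc, D.hxx, mul_zero, smul_zero]
  have hxzx : D.x * (D.z * D.x) = 0 := by rw [← mul_assoc, D.x_mul_z, mul_assoc, D.hxx, mul_zero]
  have hyyx : D.y * (D.y * D.x) = 0 := by rw [← mul_assoc, D.hyy, zero_mul]
  have hyzx : D.y * (D.z * D.x) = 0 := by rw [← mul_assoc, D.hyz, zero_mul]
  have hzyx : D.z * (D.y * D.x) = 0 := by rw [← mul_assoc, D.z_mul_y, mul_assoc, D.hxx, mul_zero]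
  have hzzx : D.z * (D.z * D.x) = 0 := by rw [← mul_assoc, D.hzz, zero_mul]
  simp only [ofCoords_eq, mulCoords, mul_add, add_mul, smul_mul_assoc, mul_smul_comm, one_mul,
    mul_one, mul_assoc, D.hxx, D.hyy, D.hzz, D.hyz, D.x_mul_y, D.x_mul_z, D.z_mul_y, hxyx, hxzx,
    hyyx, hyzx, hzyx, hzzx, mul_zero, smul_zero, Matrix.cons_val]
  module

lemma repr_mul (u v : Λ) :
    ⇑(D.basis.repr (u * v)) = mulCoords q (D.basis.repr u) (D.basis.repr v) := by
  conv_lhs => rw [← D.ofCoords_repr u, ← D.ofCoords_repr v, ofCoords_mul, repr_ofCoords]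

lemma repr_one : D.basis.repr 1 = Finsupp.single 0 1 := by rw [← D.hb0, Module.Basis.repr_self]
lemma repr_x : D.basis.repr D.x = Finsupp.single 1 1 := by rw [← D.hb1, Module.Basis.repr_self]
lemma repr_y : D.basis.repr D.y = Finsupp.single 2 1 := by rw [← D.hb2, Module.Basis.repr_self]
lemma repr_z : D.basis.repr D.z = Finsupp.single 3 1 := by rw [← D.hb3, Module.Basis.repr_self]
lemma repr_yx : D.basis.repr (D.y * D.x) = Finsupp.single 4 1 := by
  rw [← D.hb4, Module.Basis.repr_self]
lemma repr_zx : D.basis.repr (D.z * D.x) = Finsupp.single 5 1 := by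
  rw [← D.hb5, Module.Basis.repr_self]

lemma x_mul (u : Λ) : D.x * u = D.basis.repr u 0 • D.x +
    (-(q * D.basis.repr u 2)) • (D.y * D.x) + D.basis.repr u 3 • (D.z * D.x) := by
  refine D.basis.ext_elem fun i => ?_
  fin_cases i <;> simp [repr_mul, mulCoords, repr_x, repr_yx, repr_zx]

lemma y_mul (u : Λ) : D.y * u = D.basis.repr u 0 • D.y + D.basis.repr u 1 • (D.y * D.x) := by
  refine D.basis.ext_elem fun i => ?_
  fin_cases i <;> simp [repr_mul, mulCoords, repr_y, repr_yx]

lemma z_mul (u : Λ) :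
    D.z * u = D.basis.repr u 0 • D.z + (D.basis.repr u 1 + D.basis.repr u 2) • (D.z * D.x) := by
  refine D.basis.ext_elem fun i => ?_
  fin_cases i <;> simp [repr_mul, mulCoords, repr_z, repr_zx]

lemma mul_yx (l : Λ) : l * (D.y * D.x) = D.basis.repr l 0 • (D.y * D.x) := by
  refine D.basis.ext_elem fun i => ?_
  fin_cases i <;> simp [repr_mul, mulCoords, repr_yx]

lemma mul_zx (l : Λ) : l * (D.z * D.x) = D.basis.repr l 0 • (D.z * D.x) := by
  refine D.basis.ext_elem fun i => ?_
  fin_cases i <;> simp [repr_mul, mulCoords, repr_zx]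

lemma isNilpotent_of_repr_zero {n : Λ} (hn : D.basis.repr n 0 = 0) : IsNilpotent n := by
  refine ⟨3, D.basis.ext_elem fun i => ?_⟩
  fin_cases i <;> simp [pow_succ, repr_mul, mulCoords, hn]

lemma isUnit_of_repr_zero_ne_zero {u : Λ} (hu : D.basis.repr u 0 ≠ 0) : IsUnit u := by
  have hn : D.basis.repr (u - algebraMap k Λ (D.basis.repr u 0)) 0 = 0 := by
    simp [Algebra.algebraMap_eq_smul_one, repr_one]
  have := (D.isNilpotent_of_repr_zero hn).isUnit_add_left_of_commute
    ((isUnit_iff_ne_zero.2 hu).map (algebraMap k Λ)) (Algebra.commutes _ _).symm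
  rwa [add_sub_cancel] at this

def soc : Submodule k Λ := Submodule.span k {D.y * D.x, D.z * D.x}

lemma yx_mem_soc : D.y * D.x ∈ D.soc := Submodule.subset_span (by simp)

lemma zx_mem_soc : D.z * D.x ∈ D.soc := Submodule.subset_span (by simp)

lemma linearIndependent_yx_zx : LinearIndependent k ![D.y * D.x, D.z * D.x] := by
  convert D.basis.linearIndependent.comp ![4, 5] (by decide) using 1
  ext i; fin_cases i <;> simp [D.hb4, D.hb5]

lemma finrank_soc : Module.finrank k D.soc = 2 := by
  rw [soc, ← Matrix.range_cons_cons_empty _ _ ![], finrank_span_eq_card D.linearIndependent_yx_zx]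
  simp

lemma mem_soc_of_repr_eq_zero {v : Λ} (h0 : D.basis.repr v 0 = 0) (h1 : D.basis.repr v 1 = 0)
    (h2 : D.basis.repr v 2 = 0) (h3 : D.basis.repr v 3 = 0) : v ∈ D.soc := by
  rw [← D.ofCoords_repr v, ofCoords_eq, h0, h1, h2, h3]
  simpa using add_mem (D.soc.smul_mem _ D.yx_mem_soc) (D.soc.smul_mem _ D.zx_mem_soc)

lemma mul_eq_smul_of_mem_soc {s : Λ} (hs : s ∈ D.soc) (l : Λ) : l * s = D.basis.repr l 0 • s := by
  obtain ⟨a, b, rfl⟩ := Submodule.mem_span_pair.1 hs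
  rw [mul_add, mul_smul_comm, mul_smul_comm, mul_yx, mul_zx, smul_comm a, smul_comm b, smul_add]

lemma mul_eq_zero_of_mem_soc {l s : Λ} (hl : ¬IsUnit l) (hs : s ∈ D.soc) : l * s = 0 := by
  rw [D.mul_eq_smul_of_mem_soc hs, not_not.1 (mt D.isUnit_of_repr_zero_ne_zero hl), zero_smul]

lemma repr_zero_eq_zero_of_mem {L : Submodule Λ Λ} (hL : Module.finrank k L = 2) {v : Λ}
    (hv : v ∈ L) : D.basis.repr v 0 = 0 := by
  refine not_not.1 fun h => ?_
  have hLtop := Ideal.eq_top_of_isUnit_mem L hv (D.isUnit_of_repr_zero_ne_zero h)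
  change Module.finrank k (L.restrictScalars k) = 2 at hL
  rw [hLtop, Submodule.restrictScalars_top, finrank_top, Module.finrank_eq_card_basis D.basis,
    Fintype.card_fin] at hL
  omega

lemma exists_mem_notMem_soc {L : Submodule Λ Λ} (hL : Module.finrank k L = 2)
    (hLsoc : L ≠ Submodule.span Λ {D.y * D.x, D.z * D.x}) : ∃ u ∈ L, u ∉ D.soc := by
  have := Module.Finite.of_basis D.basis
  by_contra! h
  have hLS : L.restrictScalars k = D.soc :=
    Submodule.eq_of_le_of_finrank_le h (by rw [finrank_soc]; exact hL.ge)
  refine hLsoc (le_antisymm (fun v hv => Submodule.span_le_restrictScalars k Λ _ (h v hv)) ?_)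
  rw [Submodule.span_le, Set.insert_subset_iff, Set.singleton_subset_iff]
  exact ⟨(hLS.ge D.yx_mem_soc :), (hLS.ge D.zx_mem_soc :)⟩

lemma not_yx_mem_and_zx_mem {L : Submodule Λ Λ} (hL : Module.finrank k L = 2) {u : Λ}
    (hu : u ∈ L) (huS : u ∉ D.soc) : ¬(D.y * D.x ∈ L ∧ D.z * D.x ∈ L) := by
  have := Module.Finite.of_basis D.basis
  rintro ⟨hyx, hzx⟩
  have hli : LinearIndependent k ![u, D.y * D.x, D.z * D.x] :=
    linearIndependent_finSucc.2 ⟨D.linearIndependent_yx_zx, by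
      rwa [soc, ← Matrix.range_cons_cons_empty _ _ ![]] at huS⟩
  have := hli.card_le_finrank_of_forall_mem (P := L.restrictScalars k)
    (by simp [Fin.forall_fin_succ, hu, hyx, hzx])
  have : 3 ≤ 2 := hL ▸ this
  omega

lemma exists_sub_smul_mem_soc (hq : q ≠ 0) {L : Submodule Λ Λ}
    (hLsoc : ¬(D.y * D.x ∈ L ∧ D.z * D.x ∈ L)) {u : Λ} (hu : u ∈ L)
    (hu0 : D.basis.repr u 0 = 0) (huS : u ∉ D.soc) :
    (∃ a : k, a ≠ 0 ∧ u - a • (D.x - D.y) ∈ D.soc) ∨ ∃ c : k, c ≠ 0 ∧ u - c • D.z ∈ D.soc := by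
  set a := D.basis.repr u 1
  set b := D.basis.repr u 2
  set c := D.basis.repr u 3
  have smul_mem_iff : ∀ {r : k} {v : Λ}, r ≠ 0 → (r • v ∈ L ↔ v ∈ L) :=
    fun hr => (L.restrictScalars k).smul_mem_iff hr
  have hyu : a • (D.y * D.x) ∈ L := by
    have := L.smul_mem D.y hu; rwa [smul_eq_mul, D.y_mul, hu0, zero_smul, zero_add] at this
  have hzu : (a + b) • (D.z * D.x) ∈ L := by
    have := L.smul_mem D.z hu; rwa [smul_eq_mul, D.z_mul, hu0, zero_smul, zero_add] at this
  have hxu : (-(q * b)) • (D.y * D.x) + c • (D.z * D.x) ∈ L := by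
    have := L.smul_mem D.x hu; rwa [smul_eq_mul, D.x_mul, hu0, zero_smul, zero_add] at this
  by_cases ha : a = 0
  · right
    have hb : b = 0 := by
      by_contra hb
      have hzx : D.z * D.x ∈ L := (smul_mem_iff (by rwa [ha, zero_add])).1 hzu
      have hyx : D.y * D.x ∈ L := (smul_mem_iff (r := -(q * b)) (by simp [hq, hb])).1 <| by
        simpa using L.sub_mem hxu (L.smul_of_tower_mem c hzx)
      exact hLsoc ⟨hyx, hzx⟩
    have hc : c ≠ 0 := fun hc => huS (D.mem_soc_of_repr_eq_zero hu0 ha hb hc)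
    refine ⟨c, hc, D.mem_soc_of_repr_eq_zero ?_ ?_ ?_ ?_⟩ <;> simp [repr_z, hu0, c]
    exacts [ha, hb]
  · left
    have hyx : D.y * D.x ∈ L := (smul_mem_iff ha).1 hyu
    have hzx : D.z * D.x ∉ L := fun hzx => hLsoc ⟨hyx, hzx⟩
    have hab : a + b = 0 := by_contra fun h => hzx ((smul_mem_iff h).1 hzu)
    have hc : c = 0 := by_contra fun h => hzx <| (smul_mem_iff h).1 <| by
      simpa using L.sub_mem hxu (L.smul_of_tower_mem (-(q * b)) hyx)
    refine ⟨a, ha, D.mem_soc_of_repr_eq_zero ?_ ?_ ?_ ?_⟩ <;>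
      simp [repr_x, repr_y, hu0, hc, a, c]
    linear_combination hab

/-- `g * u` is a nonzero socle element of `Λu`, so `Λu` is `2`-dimensional and equals `L`; and
`u`, `a • w` differ by a socle element, which every nonunit kills, so they have the same left
annihilator. -/
lemma le_span_and_nonempty_equiv {L : Submodule Λ Λ} (hL : Module.finrank k L = 2) {u w g : Λ}
    (hu : u ∈ L) (huS : u ∉ D.soc) {a : k} (ha : a ≠ 0) (huw : u - a • w ∈ D.soc)
    (hg : D.basis.repr g 0 = 0) (hgw : g * w ∈ D.soc) (hgw0 : g * w ≠ 0) :
    L ≤ Submodule.span Λ {w, D.y * D.x, D.z * D.x} ∧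
      Nonempty (L ≃ₗ[Λ] Submodule.span Λ {w}) := by
  have := Module.Finite.of_basis D.basis
  have hgu : g * u = a • (g * w) := by
    rw [← sub_add_cancel u (a • w), mul_add, D.mul_eq_smul_of_mem_soc huw, hg, zero_smul, zero_add,
      mul_smul_comm]
  have hguS : g * u ∈ D.soc := hgu ▸ D.soc.smul_mem a hgw
  have hli : LinearIndependent k ![u, g * u] := linearIndependent_fin2.2
    ⟨by simpa [hgu, ha] using hgw0, fun r hr => huS <| by
      rw [← show r • (g * u) = u from hr]; exact D.soc.smul_mem r hguS⟩
  obtain rfl : Submodule.span Λ {u} = L :=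
    Submodule.eq_of_le_of_linearIndependent ((Submodule.span_singleton_le_iff_mem _ _).2 hu) hli
      (by simpa [Fin.forall_fin_two, Submodule.mem_span_singleton_self] using
        Submodule.smul_mem _ g (Submodule.mem_span_singleton_self u)) hL
  refine ⟨Submodule.span_le.2 (Set.singleton_subset_iff.2 ?_),
    Submodule.nonempty_linearEquiv_span_singleton_of_torsionOf_eq ?_⟩
  · rw [← sub_add_cancel u (a • w)]
    refine add_mem ?_ (Submodule.smul_of_tower_mem _ a (Submodule.subset_span (by simp)))
    exact Submodule.span_le_restrictScalars k Λ _ (Submodule.span_mono (Set.subset_insert _ _) huw)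
  · have hw : w ≠ 0 := by rintro rfl; simp at hgw0
    rw [Ideal.torsionOf_eq_of_forall_not_isUnit (w := a • w) (by rintro rfl; exact huS (zero_mem _))
      (smul_ne_zero ha hw) fun r hr => D.mul_eq_zero_of_mem_soc hr huw]
    ext r
    simp [ha]

end LambdaAlg

open LambdaAlg in
/-- Any 2-dimensional left ideal `L ≠ soc Λ` is contained in `U(1,−1,0)` and
isomorphic to `Λ(x−y)`, or contained in `U(0,0,1)` and isomorphic to `Λz`. -/
theorem statement2 (k : Type) [Field k] (q : k) (hq : q ≠ 0)
    (Λ : Type) [Ring Λ] [Algebra k Λ] (D : LambdaAlg k q Λ)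
    (L : Submodule Λ Λ) (hL : Module.finrank k ↥L = 2)
    (hLsoc : L ≠ Submodule.span Λ {D.y * D.x, D.z * D.x}) :
    (L ≤ D.U 1 (-1) 0 ∧ Nonempty (↥L ≃ₗ[Λ] ↥(Submodule.span Λ {D.x - D.y})))
    ∨ (L ≤ D.U 0 0 1 ∧ Nonempty (↥L ≃ₗ[Λ] ↥(Submodule.span Λ {D.z}))) := by
  obtain ⟨u, hu, huS⟩ := D.exists_mem_notMem_soc hL hLsoc
  rcases D.exists_sub_smul_mem_soc hq (D.not_yx_mem_and_zx_mem hL hu huS) hu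
    (D.repr_zero_eq_zero_of_mem hL hu) huS with ⟨a, ha, hua⟩ | ⟨c, hc, huc⟩
  · left
    have hw : D.w 1 (-1) 0 = D.x - D.y := by simp [w, sub_eq_add_neg]
    have hyw : D.y * (D.x - D.y) = D.y * D.x := by rw [mul_sub, D.hyy, sub_zero]
    rw [U, hw]
    exact D.le_span_and_nonempty_equiv hL hu huS ha hua (by simp [repr_y])
      (hyw ▸ D.yx_mem_soc) (hyw ▸ D.linearIndependent_yx_zx.ne_zero 0)
  · right
    have hw : D.w 0 0 1 = D.z := by simp [w]
    rw [U, hw]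
    exact D.le_span_and_nonempty_equiv hL hu huS hc huc (by simp [repr_x])
      (D.x_mul_z ▸ D.zx_mem_soc) (D.x_mul_z ▸ D.linearIndependent_yx_zx.ne_zero 1)
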